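/- arXiv:1912.03370 — 2 statements merged into one kernel-verified Lean document; each statement's English description precedes it below -/
import Mathlib

section
/- If a skew-symmetric n×n matrix x over a field K of characteristic not 2 or 3 satisfies x∘y = (1/2)(xy+yx) = 0 for all skew-symmetric n×n matrices y, then x = 0. -/
open Matrix

/-- If a skew-symmetric `n × n` matrix `x` over a field `K` of characteristic `≠ 2, 3`
satisfies `x ∘ y = (1/2)(xy + yx) = 0` for all skew-symmetric `y`, then `x = 0`. -/
theorem skew_jordan_orthogonal_eq_zero
    {K : Type*} [Field K] (h2 : (2 : K) ≠ 0) (h3 : (3 : K) ≠ 0) {n : ℕ}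
    (x : Matrix (Fin n) (Fin n) K) (hx : xᵀ = -x)
    (h : ∀ y : Matrix (Fin n) (Fin n) K, yᵀ = -y →
      ((1 : K) / 2) • (x * y + y * x) = 0) :
    x = 0 := by
  ext k l
  simp only [Matrix.zero_apply]
  rcases eq_or_ne k l with rfl | hkl
  · have := congrFun (congrFun hx k) k
    simp only [Matrix.transpose_apply, Matrix.neg_apply] at this
    have h2' : (2 : K) * x k k = 0 := by ring_nf; linear_combination this
    rcases mul_eq_zero.mp h2' with h' | h'
    · exact absurd h' h2
    · exact h'
  · set E : Matrix (Fin n) (Fin n) K :=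
      single k l 1 - single l k 1 with hEdef
    have hEskew : Eᵀ = -E := by
      ext a b
      simp only [hEdef, Matrix.transpose_apply, Matrix.sub_apply, Matrix.neg_apply,
        Matrix.single, Matrix.of_apply]
      split_ifs <;> simp_all <;> ring
    have hE0 := h E hEskew
    have hE : x * E + E * x = 0 := by
      rcases smul_eq_zero.mp hE0 with h' | h'
      · exact absurd h' (by simpa using one_div_ne_zero h2)
      · exact h'
    have hk := congrFun (congrFun hE k) k
    have hskew := congrFun (congrFun hx k) l
    simp only [Matrix.transpose_apply, Matrix.neg_apply] at hskew
    simp only [Matrix.add_apply, Matrix.mul_apply, Matrix.zero_apply, hEdef,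
      Matrix.sub_apply, Matrix.single, Matrix.of_apply, mul_ite, ite_mul,
      mul_one, one_mul, mul_zero, zero_mul, hkl, hkl.symm, and_false, false_and,
      and_true, true_and, if_false, sub_mul, mul_sub, Finset.sum_sub_distrib,
      Finset.sum_ite_eq, Finset.sum_ite_eq', Finset.mem_univ, if_true, zero_sub,
      sub_zero] at hk
    simp only [Finset.sum_const_zero, zero_sub, sub_zero] at hk
    rw [hskew] at hk
    have h2' : (2 : K) * x k l = 0 := by linear_combination -hk
    rcases mul_eq_zero.mp h2' with h' | h'
    · exact absurd h' h2
    · exact h'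
end

section
/- Let A be a commutative algebra with unit over a field of characteristic ≠ 2, and let D be a δ-derivation of A with δ ≠ 1. Then δ = 1/2 and D(x) = x·D(1) for all x ∈ A; moreover the element a = D(1) satisfies 2(xy)a - (xa)y - (ya)x = 0 for all x, y ∈ A. -/
/-- Let `A` be a commutative (not necessarily associative) algebra with unit over a field
`K` of characteristic `≠ 2`, and let `D` be a nonzero `δ`-derivation of `A` with `δ ≠ 1`.
Then `δ = 1/2`, `D(x) = x · D(1)` for all `x`, and `a = D(1)` satisfies
`2(xy)a - (xa)y - (ya)x = 0` for all `x, y ∈ A`. -/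
theorem delta_derivation_of_unital_commutative_algebra
    {K A : Type*} [Field K] (h2 : (2 : K) ≠ 0)
    [NonAssocRing A] [Module K A]
    (hcomm : ∀ x y : A, x * y = y * x)
    (δ : K) (hδ : δ ≠ 1)
    (D : A →ₗ[K] A) (hD0 : D ≠ 0)
    (hD : ∀ x y : A, D (x * y) = δ • (D x * y) + δ • (x * D y)) :
    δ = 1 / 2 ∧ (∀ x : A, D x = x * D 1) ∧
      (∀ x y : A, (2 : K) • (x * y * D 1) - (x * D 1) * y - (y * D 1) * x = 0) := by
  set a := D 1 with ha
  have h1 : ∀ x : A, ((1 : K) - δ) • D x = δ • (x * a) := by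
    intro x
    have h := hD x 1
    rw [mul_one, mul_one] at h
    calc ((1 : K) - δ) • D x = D x - δ • D x := by rw [sub_smul, one_smul]
      _ = δ • (x * a) := by nth_rewrite 1 [h]; abel
  have h2' : ((1 : K) - 2 * δ) • a = 0 := by
    have h := hD 1 1
    rw [mul_one, one_mul, mul_one, ← ha] at h
    calc ((1 : K) - 2 * δ) • a = a - (δ • a + δ • a) := by
          rw [sub_smul, one_smul, two_mul, add_smul]
      _ = 0 := by rw [← h]; abel
  have hδhalf : δ = 1 / 2 := by
    by_contra hhalf
    have hne : (1 : K) - 2 * δ ≠ 0 := by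
      intro hc
      apply hhalf
      rw [eq_div_iff h2]
      linear_combination -hc
    have ha0 : a = 0 := by
      have := congrArg (fun z => ((1 : K) - 2 * δ)⁻¹ • z) h2'
      simpa [smul_smul, inv_mul_cancel₀ hne] using this
    have hne1 : (1 : K) - δ ≠ 0 := sub_ne_zero.mpr (Ne.symm hδ)
    have hDzero : D = 0 := by
      ext x
      have h := h1 x
      rw [ha0, mul_zero, smul_zero] at h
      have := congrArg (fun z => ((1 : K) - δ)⁻¹ • z) h
      simpa [smul_smul, inv_mul_cancel₀ hne1] using this
    exact hD0 hDzero
  have hhalfne : ((1 : K) / 2) ≠ 0 := one_div_ne_zero h2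
  have hDx : ∀ x : A, D x = x * a := by
    intro x
    have h := h1 x
    rw [hδhalf] at h
    have h' : ((1 : K) - 1 / 2) = 1 / 2 := by
      rw [eq_div_iff h2, sub_mul, one_mul, div_mul_cancel₀ _ h2]
      ring
    rw [h'] at h
    have := congrArg (fun z => (2 : K) • z) h
    simpa [smul_smul, mul_div_cancel₀, h2, mul_one_div_cancel h2] using this
  refine ⟨hδhalf, hDx, fun x y => ?_⟩
  have h := hD x y
  rw [hδhalf, hDx (x * y), hDx x, hDx y] at h
  have h2s : (2 : K) • (x * y * a) = (x * a) * y + x * (y * a) := by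
    rw [h, smul_add, smul_smul, smul_smul, mul_one_div_cancel h2, one_smul, one_smul]
  rw [h2s, hcomm x (y * a)]
  abel
end
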